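/- Let H₁, H₂ and H be complex Hilbert spaces and let j₁ : H₁ → H, j₂ : H₂ → H be continuous linear maps that are isometric (‖jᵢ x‖ = ‖x‖ for all x). Then the operator norm of (j₁ ∘ j₁†) ∘ (j₂ ∘ j₂†) : H → H equals the operator norm of j₁† ∘ j₂ : H₂ → H₁. -/
import Mathlib

open ContinuousLinearMap in
lemma adjoint_comp_self_of_isometry
    {H₁ H : Type*}
    [NormedAddCommGroup H₁] [InnerProductSpace ℂ H₁] [CompleteSpace H₁]
    [NormedAddCommGroup H] [InnerProductSpace ℂ H] [CompleteSpace H]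
    (j : H₁ →L[ℂ] H) (hj : ∀ x, ‖j x‖ = ‖x‖) :
    (adjoint j).comp j = ContinuousLinearMap.id ℂ H₁ := by
  have li : H₁ →ₗᵢ[ℂ] H := ⟨(j : H₁ →ₗ[ℂ] H), hj⟩
  ext x
  apply ext_inner_right ℂ
  intro y
  simp only [ContinuousLinearMap.coe_comp', Function.comp_apply,
    ContinuousLinearMap.adjoint_inner_left, ContinuousLinearMap.id_apply]
  exact (⟨(j : H₁ →ₗ[ℂ] H), hj⟩ : H₁ →ₗᵢ[ℂ] H).inner_map_map x y

open ContinuousLinearMap in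
lemma norm_le_one_of_isometry
    {H₁ H : Type*}
    [NormedAddCommGroup H₁] [InnerProductSpace ℂ H₁]
    [NormedAddCommGroup H] [InnerProductSpace ℂ H]
    (j : H₁ →L[ℂ] H) (hj : ∀ x, ‖j x‖ = ‖x‖) : ‖j‖ ≤ 1 := by
  apply ContinuousLinearMap.opNorm_le_bound _ zero_le_one
  intro x; rw [hj x, one_mul]

/-- For isometric continuous linear maps `j₁ : H₁ → H` and `j₂ : H₂ → H` between complex
Hilbert spaces, `‖(j₁ ∘ j₁†) ∘ (j₂ ∘ j₂†)‖ = ‖j₁† ∘ j₂‖`. -/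
theorem norm_proj_comp_proj_eq_norm_transfer
    {H₁ H₂ H : Type*}
    [NormedAddCommGroup H₁] [InnerProductSpace ℂ H₁] [CompleteSpace H₁]
    [NormedAddCommGroup H₂] [InnerProductSpace ℂ H₂] [CompleteSpace H₂]
    [NormedAddCommGroup H] [InnerProductSpace ℂ H] [CompleteSpace H]
    (j₁ : H₁ →L[ℂ] H) (j₂ : H₂ →L[ℂ] H)
    (hj₁ : ∀ x, ‖j₁ x‖ = ‖x‖) (hj₂ : ∀ x, ‖j₂ x‖ = ‖x‖) :
    ‖(j₁.comp (ContinuousLinearMap.adjoint j₁)).comp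
        (j₂.comp (ContinuousLinearMap.adjoint j₂))‖
      = ‖(ContinuousLinearMap.adjoint j₁).comp j₂‖ := by
  set A := (ContinuousLinearMap.adjoint j₁).comp j₂ with hA
  set E := (j₁.comp (ContinuousLinearMap.adjoint j₁)).comp
      (j₂.comp (ContinuousLinearMap.adjoint j₂)) with hE
  have hj₁n : ‖j₁‖ ≤ 1 := norm_le_one_of_isometry j₁ hj₁
  have hj₂n : ‖j₂‖ ≤ 1 := norm_le_one_of_isometry j₂ hj₂
  have hadj₁ : ‖ContinuousLinearMap.adjoint j₁‖ ≤ 1 := by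
    rw [LinearIsometryEquiv.norm_map ContinuousLinearMap.adjoint j₁]; exact hj₁n
  have hadj₂ : ‖ContinuousLinearMap.adjoint j₂‖ ≤ 1 := by
    rw [LinearIsometryEquiv.norm_map ContinuousLinearMap.adjoint j₂]; exact hj₂n
  have hE' : E = (j₁.comp A).comp (ContinuousLinearMap.adjoint j₂) := by
    ext x; simp [hE, hA]
  have h1 : ‖E‖ ≤ ‖A‖ := by
    rw [hE']
    calc ‖(j₁.comp A).comp (ContinuousLinearMap.adjoint j₂)‖
        ≤ ‖j₁.comp A‖ * ‖ContinuousLinearMap.adjoint j₂‖ :=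
          ContinuousLinearMap.opNorm_comp_le _ _
      _ ≤ (‖j₁‖ * ‖A‖) * 1 := by
          apply mul_le_mul (ContinuousLinearMap.opNorm_comp_le _ _) hadj₂
            (norm_nonneg _) (by positivity)
      _ ≤ (1 * ‖A‖) * 1 := by
          apply mul_le_mul_of_nonneg_right _ zero_le_one
          exact mul_le_mul_of_nonneg_right hj₁n (norm_nonneg _)
      _ = ‖A‖ := by ring
  have h2 : ‖A‖ ≤ ‖E‖ := by
    have hAE : A = ((ContinuousLinearMap.adjoint j₁).comp E).comp j₂ := by
      ext x
      simp only [hE, hA, ContinuousLinearMap.coe_comp', Function.comp_apply]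
      have e1 := ContinuousLinearMap.ext_iff.mp (adjoint_comp_self_of_isometry j₁ hj₁)
      have e2 := ContinuousLinearMap.ext_iff.mp (adjoint_comp_self_of_isometry j₂ hj₂)
      simp only [ContinuousLinearMap.coe_comp', Function.comp_apply,
        ContinuousLinearMap.id_apply] at e1 e2
      rw [e1, e2]
    rw [hAE]
    calc ‖((ContinuousLinearMap.adjoint j₁).comp E).comp j₂‖
        ≤ ‖(ContinuousLinearMap.adjoint j₁).comp E‖ * ‖j₂‖ :=
          ContinuousLinearMap.opNorm_comp_le _ _
      _ ≤ (‖ContinuousLinearMap.adjoint j₁‖ * ‖E‖) * 1 := by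
          apply mul_le_mul (ContinuousLinearMap.opNorm_comp_le _ _) hj₂n
            (norm_nonneg _) (by positivity)
      _ ≤ (1 * ‖E‖) * 1 := by
          apply mul_le_mul_of_nonneg_right _ zero_le_one
          exact mul_le_mul_of_nonneg_right hadj₁ (norm_nonneg _)
      _ = ‖E‖ := by ring
  exact le_antisymm h1 h2
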